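/- arXiv:2511.23382 — 5 statements merged into one kernel-verified Lean document; each statement's English description precedes it below -/
import Mathlib

section
/- Let S be a complete DVR with uniformizer t and residue field k, let I' ⊆ S⟦x₁,…,xₙ⟧ be an ideal such that R = S⟦x₁,…,xₙ⟧/I' is flat over S, and let I ⊆ k⟦x₁,…,xₙ⟧ be the image of I' under reduction modulo t, assumed to be a finitely generated prime ideal. Then I' is a prime ideal. -/
/-!
Write `R = S⟦x⟧ ⧸ I'` and `τ` for the image of `t` in `R`. Flatness over `S` makes `τ` a
non-zero-divisor on `R`, and `R ⧸ τR ≅ k⟦x⟧ ⧸ I` is a domain. Since `R` is a Noetherian local ring,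
Krull's intersection theorem gives `⋂ τⁿR = 0`, so every nonzero element of `R` is `τ^i a` with
`τ ∤ a`. If `(τ^i a) (τ^j b) = 0`, regularity of `τ` gives `ab = 0 ∈ τR`, so `τ ∣ a` or `τ ∣ b`.
-/

open MvPowerSeries

namespace MvPowerSeries

variable {σ R T : Type*} [CommRing R] [CommRing T]

theorem map_surjective {f : R →+* T} (hf : Function.Surjective f) :
    Function.Surjective (map (σ := σ) f) := by
  intro p
  choose g hg using hf
  refine ⟨fun d ↦ g (coeff d p), ?_⟩
  ext d
  exact (coeff_map f d _).trans (hg _)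

theorem C_dvd_iff {r : R} {p : MvPowerSeries σ R} : C r ∣ p ↔ ∀ d, r ∣ coeff d p := by
  refine ⟨fun ⟨q, hq⟩ d ↦ ⟨coeff d q, by rw [hq, coeff_C_mul]⟩, fun h ↦ ?_⟩
  choose q hq using h
  refine ⟨q, ?_⟩
  ext d
  exact (hq d).trans (coeff_C_mul d q r).symm

theorem ker_map_of_ker_eq_span_singleton {f : R →+* T} {r : R}
    (hf : RingHom.ker f = Ideal.span {r}) :
    RingHom.ker (map (σ := σ) f) = Ideal.span {C r} := by
  ext p
  simp only [RingHom.mem_ker, Ideal.mem_span_singleton, C_dvd_iff, MvPowerSeries.ext_iff,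
    coeff_map, map_zero]
  simp only [← Ideal.mem_span_singleton, ← hf, RingHom.mem_ker]

end MvPowerSeries

theorem finiteMultiplicity_of_isHausdorff {R : Type*} [CommRing R] {x b : R}
    [IsHausdorff (Ideal.span {x}) R] (hb : b ≠ 0) : FiniteMultiplicity x b := by
  rw [← not_not (a := FiniteMultiplicity x b), FiniteMultiplicity.not_iff_forall]
  refine fun h ↦ hb (IsHausdorff.haus ‹_› b fun m ↦ ?_)
  rw [SModEq.zero, smul_eq_mul, Ideal.mul_top, Ideal.span_singleton_pow, Ideal.mem_span_singleton]
  exact h m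

theorem isDomain_of_isPrime_span_singleton {R : Type*} [CommRing R] {x : R}
    [IsHausdorff (Ideal.span {x}) R] (hreg : IsSMulRegular R x)
    (hx : (Ideal.span {x}).IsPrime) : IsDomain R := by
  have : Nontrivial R :=
    not_subsingleton_iff_nontrivial.mp fun _ ↦ hx.ne_top (Subsingleton.elim _ _)
  have : NoZeroDivisors R := by
    refine ⟨fun {a b} hab ↦ ?_⟩
    by_contra! h
    obtain ⟨a', ha, ha'⟩ :=
      (finiteMultiplicity_of_isHausdorff (x := x) h.1).exists_eq_pow_mul_and_not_dvd
    obtain ⟨b', hb, hb'⟩ :=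
      (finiteMultiplicity_of_isHausdorff (x := x) h.2).exists_eq_pow_mul_and_not_dvd
    generalize multiplicity x a = i at ha
    generalize multiplicity x b = j at hb
    subst ha hb
    have hab' : a' * b' = 0 := (hreg.pow (i + j)).right_eq_zero_of_smul <| by
      rw [smul_eq_mul, ← hab]
      ring
    simp only [← Ideal.mem_span_singleton] at ha' hb'
    exact (hx.mem_or_mem (hab' ▸ zero_mem _)).elim ha' hb'
  exact NoZeroDivisors.to_isDomain R

namespace Ideal

theorem isPrime_of_isPrime_sup_span_singleton {A : Type*} [CommRing A]
    [IsNoetherianRing A] [IsLocalRing A] {I : Ideal A} {τ : A}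
    (hreg : IsSMulRegular (A ⧸ I) (Quotient.mk I τ)) (hp : (I ⊔ span {τ}).IsPrime) :
    I.IsPrime := by
  have hx : (span {Quotient.mk I τ}).IsPrime := by
    have : span {Quotient.mk I τ} = (I ⊔ span {τ}).map (Quotient.mk I) := by
      rw [map_sup, map_quotient_self, bot_sup_eq, map_span, Set.image_singleton]
    rw [this]
    exact map_isPrime_of_surjective Quotient.mk_surjective (by rw [mk_ker]; exact le_sup_left)
  have : Nontrivial (A ⧸ I) :=
    Quotient.nontrivial_iff.mpr (ne_top_of_le_ne_top hp.ne_top le_sup_left)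
  have : IsLocalRing (A ⧸ I) := .of_surjective' _ Quotient.mk_surjective
  have : IsHausdorff (span {Quotient.mk I τ}) (A ⧸ I) := .of_isLocalRing _ _ hx.ne_top
  rw [← Quotient.isDomain_iff_prime]
  exact isDomain_of_isPrime_span_singleton hreg hx

end Ideal

theorem stmt2_general (S : Type*) [CommRing S] [IsDomain S] [IsDiscreteValuationRing S]
    (t : S) (ht : Irreducible t)
    (n : ℕ) (I' : Ideal (MvPowerSeries (Fin n) S))
    (hflat : Module.Flat S (MvPowerSeries (Fin n) S ⧸ I'))
    (I : Ideal (MvPowerSeries (Fin n) (IsLocalRing.ResidueField S)))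
    (hI : I = I'.map (MvPowerSeries.map (σ := Fin n) (IsLocalRing.residue S)))
    (hprime : I.IsPrime) :
    I'.IsPrime := by
  have hker : RingHom.ker (MvPowerSeries.map (σ := Fin n) (IsLocalRing.residue S)) =
      Ideal.span {C t} :=
    ker_map_of_ker_eq_span_singleton (by rw [IsLocalRing.ker_residue, ht.maximalIdeal_eq])
  have hsup : (I' ⊔ Ideal.span {C t}).IsPrime := by
    rw [← hker, ← Ideal.comap_map_of_surjective' _
      (map_surjective IsLocalRing.residue_surjective), ← hI]
    exact Ideal.comap_isPrime _ I
  have hreg : IsSMulRegular (MvPowerSeries (Fin n) S ⧸ I') (algebraMap S _ t) :=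
    (IsSMulRegular.of_ne_zero ht.ne_zero).of_flat
  exact Ideal.isPrime_of_isPrime_sup_span_singleton hreg hsup

/-- Let `S` be a complete DVR with uniformizer `t` and residue field `k`,
let `I' ⊆ S⟦x₁,…,xₙ⟧` be an ideal with `S⟦x₁,…,xₙ⟧/I'` flat over `S`, and let
`I ⊆ k⟦x₁,…,xₙ⟧` be the image of `I'` under reduction modulo `t`, assumed to be a
finitely generated prime ideal. Then `I'` is prime. -/
theorem stmt2 (S : Type*) [CommRing S] [IsDomain S] [IsDiscreteValuationRing S]
    [IsAdicComplete (IsLocalRing.maximalIdeal S) S]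
    (t : S) (ht : Irreducible t)
    (n : ℕ) (I' : Ideal (MvPowerSeries (Fin n) S))
    (hflat : Module.Flat S (MvPowerSeries (Fin n) S ⧸ I'))
    (I : Ideal (MvPowerSeries (Fin n) (IsLocalRing.ResidueField S)))
    (hI : I = I'.map (MvPowerSeries.map (σ := Fin n) (IsLocalRing.residue S)))
    (hfg : I.FG) (hprime : I.IsPrime) :
    I'.IsPrime :=
  stmt2_general S t ht n I' hflat I hI hprime
end

section
/- Let k be a field, e ≥ 3, and a₂,…,a_{e−1} ∈ ℕ with all aᵢ ≥ 2. Define, for 1 ≤ i, i+1 ≤ j−1 ≤ e−1, the polynomials g_{i,j} = xᵢxⱼ − x_{i+1}^{a_{i+1}} if j = i+2, and g_{i,j} = xᵢxⱼ − x_{i+1}^{a_{i+1}−1}(x_{i+2}^{a_{i+2}−2}⋯x_{j−2}^{a_{j−2}−2})x_{j−1}^{a_{j−1}−1} if j > i+2. Then for all indices i < j < k−1 the identity xⱼ·g_{i,k} = xᵢ·g_{j,k} + (x_{j+1}^{a_{j+1}−2}⋯x_{k−2}^{a_{k−2}−2})·x_{k−1}^{a_{k−1}−1}·g_{i,j+1}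 holds in the polynomial ring k[x₁,…,x_e]. -/
/-!
Write `Π(s, t) = ∏_{s < l < t} xₗ^(aₗ - 2)`. Since all `aₗ ≥ 2`, every equation takes the uniform
shape `g_{i,j} = xᵢxⱼ - x_{i+1} x_{j-1} Π(i, j)`, also for `j = i + 2`. In this form the coefficient
of the syzygy is `x_{m-1} Π(j, m)`, and the identity reduces to `Π(i, m) = Π(i, j + 1) Π(j, m)`,
after which it is a ring identity.
-/

namespace Finset

variable {M : Type*} [CommMonoid M]

theorem prod_Ioo_succ_top {s t : ℕ} (h : s < t) (f : ℕ → M) :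
    ∏ l ∈ Ioo s (t + 1), f l = (∏ l ∈ Ioo s t, f l) * f t := by
  simp only [← Ico_add_one_left_eq_Ioo]
  exact prod_Ico_succ_top h f

theorem prod_Ioo_eq_mul_prod_Ioo_succ {s t : ℕ} (h : s + 1 < t) (f : ℕ → M) :
    ∏ l ∈ Ioo s t, f l = f (s + 1) * ∏ l ∈ Ioo (s + 1) t, f l := by
  simp only [← Ico_add_one_left_eq_Ioo]
  exact prod_eq_prod_Ico_succ_bot h f

theorem prod_Ioo_succ_mul_prod_Ioo (f : ℕ → M) {s t u : ℕ} (hst : s ≤ t) (htu : t < u) :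
    (∏ l ∈ Ioo s (t + 1), f l) * ∏ l ∈ Ioo t u, f l = ∏ l ∈ Ioo s u, f l := by
  simp only [← Ico_add_one_left_eq_Ioo]
  exact prod_Ico_consecutive f (by omega) htu

end Finset

open Finset

theorem pow_pred_eq_mul_pow_sub_two {M : Type*} [Monoid M] (y : M) {n : ℕ} (hn : 2 ≤ n) :
    y ^ (n - 1) = y * y ^ (n - 2) := by
  rw [← pow_succ']
  congr 1
  omega

section Monomials

variable {M : Type*} [CommMonoid M] (x : ℕ → M) (a : ℕ → ℕ)

theorem prod_Ioo_mul_pow_pred {s t : ℕ} (hst : s < t) (ht : 2 ≤ a t) :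
    (∏ l ∈ Ioo s t, x l ^ (a l - 2)) * x t ^ (a t - 1) =
      x t * ∏ l ∈ Ioo s (t + 1), x l ^ (a l - 2) := by
  rw [prod_Ioo_succ_top hst, pow_pred_eq_mul_pow_sub_two _ ht]
  ac_rfl

theorem pow_pred_mul_prod_Ioo {s t : ℕ} (hst : s + 1 < t) (hs : 2 ≤ a (s + 1)) :
    x (s + 1) ^ (a (s + 1) - 1) * ∏ l ∈ Ioo (s + 1) t, x l ^ (a l - 2) =
      x (s + 1) * ∏ l ∈ Ioo s t, x l ^ (a l - 2) := by
  rw [prod_Ioo_eq_mul_prod_Ioo_succ hst, pow_pred_eq_mul_pow_sub_two _ hs]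
  ac_rfl

theorem pow_eq_mul_mul_prod_Ioo (i : ℕ) (h : 2 ≤ a (i + 1)) :
    x (i + 1) ^ a (i + 1) = x (i + 1) * x (i + 1) * ∏ l ∈ Ioo i (i + 2), x l ^ (a l - 2) := by
  have h₁ : (∏ l ∈ Ioo i (i + 1), x l ^ (a l - 2)) * x (i + 1) ^ (a (i + 1) - 1) =
      x (i + 1) * ∏ l ∈ Ioo i (i + 2), x l ^ (a l - 2) :=
    prod_Ioo_mul_pow_pred x a (Nat.lt_succ_self i) h
  rw [← Ico_add_one_left_eq_Ioo, Ico_self, prod_empty, one_mul] at h₁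
  rw [mul_assoc, ← h₁, ← pow_succ']
  congr 1
  omega

theorem pow_pred_mul_prod_Ioo_mul_pow_pred {i j : ℕ} (hij : i + 2 < j) (hi : 2 ≤ a (i + 1))
    (hj : 2 ≤ a (j - 1)) :
    x (i + 1) ^ (a (i + 1) - 1) * (∏ l ∈ Ioo (i + 1) (j - 1), x l ^ (a l - 2)) *
        x (j - 1) ^ (a (j - 1) - 1) =
      x (i + 1) * x (j - 1) * ∏ l ∈ Ioo i j, x l ^ (a l - 2) := by
  rw [mul_assoc, prod_Ioo_mul_pow_pred x a (by omega) hj, Nat.sub_add_cancel (by omega),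
    mul_left_comm, pow_pred_mul_prod_Ioo x a (by omega) hi]
  ac_rfl

end Monomials

open MvPolynomial in
theorem stmt5_general (k : Type*) [Field k] (e : ℕ)
    (a : ℕ → ℕ) (ha : ∀ l, 2 ≤ l → l ≤ e - 1 → 2 ≤ a l)
    (g : ℕ → ℕ → MvPolynomial ℕ k)
    (hg2 : ∀ i, g i (i + 2) = X i * X (i + 2) - X (i + 1) ^ a (i + 1))
    (hg3 : ∀ i j, i + 2 < j →
      g i j = X i * X j - X (i + 1) ^ (a (i + 1) - 1) *
        (∏ l ∈ Finset.Ioo (i + 1) (j - 1), X l ^ (a l - 2)) *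
        X (j - 1) ^ (a (j - 1) - 1)) :
    ∀ i j m : ℕ, 1 ≤ i → i < j → j < m - 1 → m ≤ e →
      X j * g i m =
        X i * g j m +
          (∏ l ∈ Finset.Ioo j (m - 1), X l ^ (a l - 2)) *
            X (m - 1) ^ (a (m - 1) - 1) * g i (j + 1) := by
  intro i j m hi hij hjm hme
  have ha' : ∀ l, i < l → l < m → 2 ≤ a l := fun l h₁ h₂ ↦ ha l (by omega) (by omega)
  have hg : ∀ s t, i ≤ s → s + 2 ≤ t → t ≤ m →
      g s t = X s * X t - X (s + 1) * X (t - 1) * ∏ l ∈ Ioo s t, X l ^ (a l - 2) := by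
    intro s t hs hst htm
    rcases hst.eq_or_lt with rfl | hst
    · rw [hg2, pow_eq_mul_mul_prod_Ioo _ _ _ (ha' _ (by omega) (by omega))]
      rfl
    · rw [hg3 s t hst,
        pow_pred_mul_prod_Ioo_mul_pow_pred _ _ hst (ha' _ (by omega) (by omega))
          (ha' _ (by omega) (by omega))]
  rw [hg i m le_rfl (by omega) le_rfl, hg j m (by omega) (by omega) le_rfl,
    hg i (j + 1) le_rfl (by omega) (by omega),
    prod_Ioo_mul_pow_pred _ _ hjm (ha' _ (by omega) (by omega)), Nat.sub_add_cancel (by omega),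
    ← prod_Ioo_succ_mul_prod_Ioo _ hij.le (by omega : j < m), Nat.add_sub_cancel]
  ring

open MvPolynomial in
/-- the first generating syzygy among Riemenschneider's equations
`g_{i,j}` for a toric surface singularity. -/
theorem stmt5 (k : Type*) [Field k] (e : ℕ) (he : 3 ≤ e)
    (a : ℕ → ℕ) (ha : ∀ l, 2 ≤ l → l ≤ e - 1 → 2 ≤ a l)
    (g : ℕ → ℕ → MvPolynomial ℕ k)
    (hg2 : ∀ i, g i (i + 2) = X i * X (i + 2) - X (i + 1) ^ a (i + 1))
    (hg3 : ∀ i j, i + 2 < j →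
      g i j = X i * X j - X (i + 1) ^ (a (i + 1) - 1) *
        (∏ l ∈ Finset.Ioo (i + 1) (j - 1), X l ^ (a l - 2)) *
        X (j - 1) ^ (a (j - 1) - 1)) :
    ∀ i j m : ℕ, 1 ≤ i → i < j → j < m - 1 → m ≤ e →
      X j * g i m =
        X i * g j m +
          (∏ l ∈ Finset.Ioo j (m - 1), X l ^ (a l - 2)) *
            X (m - 1) ^ (a (m - 1) - 1) * g i (j + 1) :=
  stmt5_general k e a ha g hg2 hg3
end

section
/- With the notation of Riemenschneider's equations g_{i,j} for data a₂,…,a_{e−1} with all aᵢ ≥ 2, for all indices with i+1 < j < k the identity xⱼ·g_{i,k} = x_k·g_{i,j} + x_{i+1}^{a_{i+1}−1}(x_{i+2}^{a_{i+2}−2}⋯x_{j−1}^{a_{j−1}−2})·g_{j−1,k} holds in the polynomial ring k[x₁,…,x_e]. -/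
/-!
With `P i j = ∏_{i<l<j} x_l^(a_l-2)`, the hypothesis `a_l ≥ 2` puts every equation in the
uniform shape `g i j = x_i x_j - x_{i+1} x_{j-1} P i j`, covering the case `j = i + 2` as well.
The coefficient of `g (j-1) m` in the syzygy is `x_{i+1} P i j`, and since the intervals
`(i, j)` and `(j-1, m)` tile `(i, m)`, `P i m = P i j * P (j-1) m`. Both sides then expand to
`x_i x_j x_m - x_{i+1} x_j x_{m-1} P i j P (j-1) m`.
-/

open MvPolynomial Finset

namespace Riemenschneider

section CommMonoid

variable {M : Type*} [CommMonoid M] (f : ℕ → M) {i j m : ℕ}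

theorem prod_Ioo_eq_mul_prod_Ioo_succ (hij : i + 1 < j) :
    ∏ l ∈ Ioo i j, f l = f (i + 1) * ∏ l ∈ Ioo (i + 1) j, f l := by
  rw [← Ico_add_one_left_eq_Ioo, prod_eq_prod_Ico_succ_bot hij, Ico_add_one_left_eq_Ioo]

theorem prod_Ioo_eq_prod_Ioo_pred_mul (hij : i + 1 < j) :
    ∏ l ∈ Ioo i j, f l = (∏ l ∈ Ioo i (j - 1), f l) * f (j - 1) := by
  obtain ⟨n, rfl⟩ : ∃ n, j = n + 1 := ⟨j - 1, by omega⟩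
  rw [← Ico_add_one_left_eq_Ioo, prod_Ico_succ_top (by omega), Ico_add_one_left_eq_Ioo,
    Nat.add_sub_cancel]

theorem prod_Ioo_mul_prod_Ioo_pred (hij : i < j) (hjm : j ≤ m) :
    (∏ l ∈ Ioo i j, f l) * ∏ l ∈ Ioo (j - 1) m, f l = ∏ l ∈ Ioo i m, f l := by
  simp only [← Ico_add_one_left_eq_Ioo, Nat.sub_add_cancel (show 1 ≤ j by omega)]
  exact prod_Ico_consecutive f (by omega) hjm

theorem pow_sub_one_eq_mul_pow_sub_two (x : M) {n : ℕ} (hn : 2 ≤ n) :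
    x ^ (n - 1) = x * x ^ (n - 2) := by
  rw [show n - 1 = n - 2 + 1 by omega, pow_succ']

theorem pow_sub_one_mul_prod_Ioo (x : ℕ → M) (a : ℕ → ℕ) (ha : 2 ≤ a (i + 1))
    (hij : i + 1 < j) :
    x (i + 1) ^ (a (i + 1) - 1) * ∏ l ∈ Ioo (i + 1) j, x l ^ (a l - 2) =
      x (i + 1) * ∏ l ∈ Ioo i j, x l ^ (a l - 2) := by
  rw [pow_sub_one_eq_mul_pow_sub_two _ ha, prod_Ioo_eq_mul_prod_Ioo_succ _ hij, mul_assoc]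

end CommMonoid

variable {R : Type*} [CommRing R] {a : ℕ → ℕ} {g : ℕ → ℕ → MvPolynomial ℕ R}

theorem g_eq_X_mul_X_sub_X_mul_X_mul_prod_Ioo
    (hg2 : ∀ i, g i (i + 2) = X i * X (i + 2) - X (i + 1) ^ a (i + 1))
    (hg3 : ∀ i j, i + 2 < j →
      g i j = X i * X j - X (i + 1) ^ (a (i + 1) - 1) *
        (∏ l ∈ Ioo (i + 1) (j - 1), X l ^ (a l - 2)) * X (j - 1) ^ (a (j - 1) - 1))
    {i j : ℕ} (hi : 2 ≤ a (i + 1)) (hj : 2 ≤ a (j - 1)) (hij : i + 2 ≤ j) :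
    g i j = X i * X j - X (i + 1) * X (j - 1) * ∏ l ∈ Ioo i j, X l ^ (a l - 2) := by
  rcases hij.eq_or_lt with rfl | hij
  · have hempty : Ioo (i + 1) (i + 2) = ∅ := by ext; simp; omega
    rw [hg2, show i + 2 - 1 = i + 1 from rfl, mul_assoc,
      ← pow_sub_one_mul_prod_Ioo X a hi (j := i + 2) (by omega), hempty, prod_empty, mul_one,
      ← pow_succ', Nat.sub_add_cancel (by omega)]
  · rw [hg3 i j hij, pow_sub_one_mul_prod_Ioo _ _ hi (by omega),
      pow_sub_one_eq_mul_pow_sub_two _ hj, prod_Ioo_eq_prod_Ioo_pred_mul _ (i := i) (j := j) (by omega)]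
    ring

end Riemenschneider

open MvPolynomial in
theorem stmt6_general (k : Type*) [Field k] (e : ℕ)
    (a : ℕ → ℕ) (ha : ∀ l, 2 ≤ l → l ≤ e - 1 → 2 ≤ a l)
    (g : ℕ → ℕ → MvPolynomial ℕ k)
    (hg2 : ∀ i, g i (i + 2) = X i * X (i + 2) - X (i + 1) ^ a (i + 1))
    (hg3 : ∀ i j, i + 2 < j →
      g i j = X i * X j - X (i + 1) ^ (a (i + 1) - 1) *
        (∏ l ∈ Finset.Ioo (i + 1) (j - 1), X l ^ (a l - 2)) *
        X (j - 1) ^ (a (j - 1) - 1)) :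
    ∀ i j m : ℕ, 1 ≤ i → i + 1 < j → j < m → m ≤ e →
      X j * g i m =
        X m * g i j +
          X (i + 1) ^ (a (i + 1) - 1) *
            (∏ l ∈ Finset.Ioo (i + 1) j, X l ^ (a l - 2)) * g (j - 1) m := by
  intro i j m hi hij hjm hme
  have hg : ∀ i' j', 1 ≤ i' → i' + 2 ≤ j' → j' ≤ e → g i' j' = X i' * X j' -
      X (i' + 1) * X (j' - 1) * ∏ l ∈ Finset.Ioo i' j', X l ^ (a l - 2) :=
    fun i' j' hi' hij' hje => Riemenschneider.g_eq_X_mul_X_sub_X_mul_X_mul_prod_Ioo hg2 hg3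
      (ha _ (by omega) (by omega)) (ha _ (by omega) (by omega)) hij'
  rw [hg i m hi (by omega) hme, hg i j hi hij (by omega), hg (j - 1) m (by omega) (by omega) hme,
    Nat.sub_add_cancel (by omega : 1 ≤ j),
    Riemenschneider.pow_sub_one_mul_prod_Ioo _ _ (ha _ (by omega) (by omega)) hij,
    ← Riemenschneider.prod_Ioo_mul_prod_Ioo_pred _ (by omega : i < j) hjm.le]
  ring

open MvPolynomial in
/-- the second generating syzygy among Riemenschneider's equations
`g_{i,j}` for a toric surface singularity. -/
theorem stmt6 (k : Type*) [Field k] (e : ℕ) (he : 3 ≤ e)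
    (a : ℕ → ℕ) (ha : ∀ l, 2 ≤ l → l ≤ e - 1 → 2 ≤ a l)
    (g : ℕ → ℕ → MvPolynomial ℕ k)
    (hg2 : ∀ i, g i (i + 2) = X i * X (i + 2) - X (i + 1) ^ a (i + 1))
    (hg3 : ∀ i j, i + 2 < j →
      g i j = X i * X j - X (i + 1) ^ (a (i + 1) - 1) *
        (∏ l ∈ Finset.Ioo (i + 1) (j - 1), X l ^ (a l - 2)) *
        X (j - 1) ^ (a (j - 1) - 1)) :
    ∀ i j m : ℕ, 1 ≤ i → i + 1 < j → j < m → m ≤ e →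
      X j * g i m =
        X m * g i j +
          X (i + 1) ^ (a (i + 1) - 1) *
            (∏ l ∈ Finset.Ioo (i + 1) j, X l ^ (a l - 2)) * g (j - 1) m :=
  stmt6_general k e a ha g hg2 hg3
end

section
/- Let k be a field and let I ⊆ k⟦x₁,…,x_e⟧ be a prime ideal of height e−2 such that xᵢ ∈ I for some i with 2 ≤ i ≤ e−1, and such that x_{i−1}x_{i+1} − xᵢ^{aᵢ} ∈ I for all i = 2,…,e−1 with aᵢ ≥ 2. Then I = (x₂,…,x_{e−1}). -/
/-!
Every binomial `x_{i-1} x_{i+1} - x_i^{a_i}` lies in the prime `I`, so once a middle variable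
lies in `I`, primality pushes its neighbours into `I` as well, and `I` contains the prime
`J = (x₂, …, x_{e-1})`. The variables `x₂, …, x_{e-1}`, adjoined one at a time, give a strictly
increasing chain of primes `0 ⊂ (x₂) ⊂ (x₂, x₃) ⊂ ⋯ ⊂ J`, so `J` already has height at least
`e - 2`; a strict inclusion `J ⊂ I` would push the height of `I` above `e - 2`.
-/

theorem Ideal.IsPrime.mem_of_mul_sub_pow_mem {R : Type*} [CommRing R] {I : Ideal R}
    (hI : I.IsPrime) {x y z : R} {n : ℕ} (h : x * y - z ^ n ∈ I) (hxy : x ∈ I ∨ y ∈ I) :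
    z ∈ I := by
  have hxyI : x * y ∈ I := hxy.elim (I.mul_mem_right y) (I.mul_mem_left x)
  refine hI.mem_of_pow_mem n ?_
  simpa using I.sub_mem hxyI h

theorem Nat.forall_of_neighbour_imp {p : ℕ → Prop} {l u j : ℕ}
    (hstep : ∀ i, l ≤ i → i ≤ u → p (i - 1) ∨ p (i + 1) → p i)
    (hlj : l ≤ j) (hju : j ≤ u) (hj : p j) : ∀ i, l ≤ i → i ≤ u → p i := by
  intro i hli hiu
  rcases le_total j i with hji | hij
  · induction i, hji using Nat.le_induction with
    | base => exact hj
    | succ n hjn ih => exact hstep _ (by omega) hiu (.inl (ih (by omega) (by omega)))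
  · induction hij using Nat.decreasingInduction with
    | self => exact hj
    | of_succ n hnj ih => exact hstep _ hli (by omega) (.inr (ih (by omega) (by omega)))

namespace MvPowerSeries

variable {σ R : Type*} [CommRing R]

theorem mem_span_X_image_of_coeff_eq_zero (S : Finset σ) {f : MvPowerSeries σ R}
    (hf : ∀ m : σ →₀ ℕ, (∀ i ∈ S, m i = 0) → coeff m f = 0) :
    f ∈ Ideal.span (X '' S) := by
  classical
  induction S using Finset.induction_on generalizing f with
  | empty => simpa [MvPowerSeries.ext_iff] using hf
  | insert s T _ ih =>
    let r : MvPowerSeries σ R := fun m => if m s = 0 then coeff m f else 0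
    have hr : r ∈ Ideal.span (X '' T) := ih fun m hm => by
      change (if m s = 0 then coeff m f else 0) = 0
      split_ifs with hms
      · exact hf m (by simpa [hms] using hm)
      · rfl
    have hX : X s ∣ f - r := X_dvd_iff.2 fun m hms => by
      change coeff m f - (if m s = 0 then coeff m f else 0) = 0
      simp [hms]
    rw [← sub_add_cancel f r]
    refine Ideal.add_mem _ ?_ (Ideal.span_mono (by simp [Set.image_insert_eq]) hr)
    obtain ⟨q, hq⟩ := hX
    rw [hq]
    exact Ideal.mul_mem_right _ _ (Ideal.subset_span ⟨s, by simp, rfl⟩)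

theorem ker_killCompl_eq_span_X_image (S : Finset σ) :
    RingHom.ker (killCompl (R := R) (Function.Embedding.subtype (· ∉ S))) =
      Ideal.span (X '' S) := by
  refine le_antisymm (fun f hf => mem_span_X_image_of_coeff_eq_zero S fun m hm => ?_) ?_
  · obtain ⟨x, rfl⟩ : m ∈ Set.range (Finsupp.embDomain (Function.Embedding.subtype (· ∉ S))) := by
      rw [Finsupp.mem_range_embDomain_iff]
      intro i hi
      exact ⟨⟨i, fun hiS => Finsupp.mem_support_iff.1 hi (hm i hiS)⟩, rfl⟩
    rw [← coeff_killCompl, RingHom.mem_ker.1 hf, map_zero]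
  · rw [Ideal.span_le]
    rintro _ ⟨i, hi, rfl⟩
    exact killCompl_X_eq_zero (by simpa using hi)

variable [IsDomain R]

theorem isPrime_span_X_image (S : Finset σ) :
    (Ideal.span (X '' S : Set (MvPowerSeries σ R))).IsPrime := by
  have := NoZeroDivisors.to_isDomain (MvPowerSeries {i // i ∉ S} R)
  rw [← ker_killCompl_eq_span_X_image]
  exact RingHom.ker_isPrime _

theorem X_notMem_span_X_image {S : Finset σ} {j : σ} (hj : j ∉ S) :
    (X j : MvPowerSeries σ R) ∉ Ideal.span (X '' S) := by
  rw [← ker_killCompl_eq_span_X_image, RingHom.mem_ker]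
  intro h
  have hX := killCompl_X (R := R) (e := Function.Embedding.subtype (· ∉ S)) ⟨j, hj⟩
  exact nonZeroDivisors.ne_zero X_mem_nonzeroDivisors (hX.symm.trans h)

theorem card_le_height_span_X_image (S : Finset σ) :
    (S.card : ℕ∞) ≤ Order.height (⟨_, isPrime_span_X_image (R := R) S⟩ : PrimeSpectrum _) := by
  classical
  induction S using Finset.induction_on with
  | empty => simp
  | insert s T hsT ih =>
    have hlt : (⟨_, isPrime_span_X_image (R := R) T⟩ : PrimeSpectrum _) <
        ⟨_, isPrime_span_X_image (insert s T)⟩ := by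
      rw [← PrimeSpectrum.asIdeal_lt_asIdeal]
      exact SetLike.lt_iff_le_and_exists.2 ⟨Ideal.span_mono (by simp [Set.image_insert_eq]),
        X s, Ideal.subset_span ⟨s, by simp, rfl⟩, X_notMem_span_X_image hsT⟩
    rw [Finset.card_insert_of_notMem hsT, Nat.cast_succ]
    exact (add_le_add ih le_rfl).trans (Order.height_add_one_le hlt)

end MvPowerSeries

open MvPowerSeries in
/-- first case of the classification theorem.  A prime ideal
`I ⊆ k⟦x₁,…,x_e⟧` of height `e−2` containing the toric binomials
`x_{i−1}x_{i+1} − xᵢ^{aᵢ}` and containing one of the middle variables equals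
`(x₂,…,x_{e−1})`.  (Variables are indexed `0,…,e−1`, so the middle variables are
those with index `1 ≤ i ≤ e−2`.) -/
theorem stmt8 (k : Type*) [Field k] (e : ℕ) (he : 3 ≤ e)
    (a : ℕ → ℕ)
    (I : Ideal (MvPowerSeries (Fin e) k)) (hprime : I.IsPrime)
    (hheight : Order.height (⟨I, hprime⟩ : PrimeSpectrum (MvPowerSeries (Fin e) k)) =
      ((e - 2 : ℕ) : ℕ∞))
    (hrel : ∀ i : ℕ, ∀ h1 : 1 ≤ i, ∀ h2 : i ≤ e - 2,
      X (⟨i - 1, by omega⟩ : Fin e) * X (⟨i + 1, by omega⟩ : Fin e) -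
        X (⟨i, by omega⟩ : Fin e) ^ a i ∈ I)
    (hvar : ∃ i : ℕ, ∃ h1 : 1 ≤ i, ∃ h2 : i ≤ e - 2,
      X (⟨i, by omega⟩ : Fin e) ∈ I) :
    I = Ideal.span {f : MvPowerSeries (Fin e) k |
      ∃ i : Fin e, 1 ≤ (i : ℕ) ∧ (i : ℕ) ≤ e - 2 ∧ f = X i} := by
  obtain ⟨j, hj1, hj2, hj⟩ := hvar
  have hmid : ∀ i, 1 ≤ i → i ≤ e - 2 → ∀ h : i < e, (X ⟨i, h⟩ : MvPowerSeries (Fin e) k) ∈ I :=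
    Nat.forall_of_neighbour_imp (fun i h1 h2 hnb _ => hprime.mem_of_mul_sub_pow_mem
      (hrel i h1 h2) (hnb.imp (· (by omega)) (· (by omega)))) hj1 hj2 fun _ => hj
  set M := Finset.Icc (⟨1, by omega⟩ : Fin e) ⟨e - 2, by omega⟩
  have hM : {f : MvPowerSeries (Fin e) k | ∃ i : Fin e, 1 ≤ (i : ℕ) ∧ (i : ℕ) ≤ e - 2 ∧ f = X i} =
      X '' M := by
    ext; simp [M, Fin.le_def, eq_comm, and_assoc]
  have hJI : Ideal.span (X '' M) ≤ I := Ideal.span_le.2 fun _ ⟨i, hi, hXi⟩ => by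
    simp only [M, Finset.coe_Icc, Set.mem_Icc, Fin.le_def] at hi
    exact hXi ▸ hmid i hi.1 hi.2 i.isLt
  rw [hM]
  refine (hJI.eq_of_not_lt fun hlt => ?_).symm
  have hchain := (add_le_add (card_le_height_span_X_image (R := k) M) le_rfl).trans
    (Order.height_add_one_le (b := ⟨I, hprime⟩) hlt)
  rw [hheight, show M.card = e - 2 by simp [M]] at hchain
  norm_cast at hchain
  omega
end

section
/- Let k be a field and let I ⊆ k⟦x₁,…,x_e⟧ be a prime ideal containing x_{i−1}x_{i+1} − xᵢ^{aᵢ} for all i = 2,…,e−1 (where aᵢ ≥ 2), and suppose xᵢ ∉ I for all i = 1,…,e. Then I contains all of Riemenschneider's equations g_{i,j} for 2 ≤ i+1 ≤ j−1 ≤ e−1. -/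
/-! Induction on `j`. Both monomials `m_{i,j}` and `m_{i,j+1}` of `g_{i,j} = xᵢxⱼ - m_{i,j}` and
`g_{i,j+1}` share the factor `c = x_{i+1}^{a_{i+1}-1} ∏_{i+1<l<j} x_l^{a_l-2}`, with
`m_{i,j} = c x_{j-1}` and `m_{i,j+1} = c xⱼ^{aⱼ-1}`, so that
`xⱼ g_{i,j+1} = x_{j+1} g_{i,j} + c (x_{j-1}x_{j+1} - xⱼ^{aⱼ})`.
Since `I` is prime and `xⱼ ∉ I`, this gives `g_{i,j+1} ∈ I`. -/

open Finset

theorem Ideal.IsPrime.mul_sub_mul_pow_mem {R : Type*} [CommRing R] {P : Ideal R}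
    (hP : P.IsPrime) {u v w y c : R} {n : ℕ} (hv : v ∉ P)
    (huv : u * v - c * w ∈ P) (hwy : w * y - v ^ (n + 1) ∈ P) :
    u * y - c * v ^ n ∈ P := by
  have hsum : v * (u * y - c * v ^ n) = y * (u * v - c * w) + c * (w * y - v ^ (n + 1)) := by
    ring
  have hmem : v * (u * y - c * v ^ n) ∈ P := by
    rw [hsum]
    exact P.add_mem (P.mul_mem_left y huv) (P.mul_mem_left c hwy)
  exact (hP.mem_or_mem hmem).resolve_left hv

namespace Riemenschneider

variable {R : Type*} [CommRing R] (x : ℕ → R) (a : ℕ → ℕ)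

def monomial (i j : ℕ) : R :=
  if j = i + 2 then x (i + 1) ^ a (i + 1)
  else x (i + 1) ^ (a (i + 1) - 1) * (∏ l ∈ Ioo (i + 1) (j - 1), x l ^ (a l - 2)) *
    x (j - 1) ^ (a (j - 1) - 1)

def cofactor (i j : ℕ) : R :=
  x (i + 1) ^ (a (i + 1) - 1) * ∏ l ∈ Ioo (i + 1) j, x l ^ (a l - 2)

variable {x a}

theorem monomial_succ_eq_cofactor_mul {i j : ℕ} (hij : i + 1 ≤ j) (ha : 2 ≤ a j) :
    monomial x a i (j + 1) = cofactor x a i (j + 1) * x j := by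
  unfold monomial cofactor
  rcases hij.eq_or_lt with rfl | hij
  · rw [if_pos rfl, Ioo_add_one_right_eq_Ioc, Ioc_self, prod_empty, mul_one, ← pow_succ,
      Nat.sub_add_cancel (by omega)]
  · rw [if_neg (by omega), Nat.add_sub_cancel, Ioo_add_one_right_eq_Ioc, ← Ioo_insert_right hij,
      prod_insert right_notMem_Ioo, show a j - 1 = a j - 2 + 1 by omega, pow_succ]
    ring

theorem monomial_add_two_eq_cofactor_mul {i j : ℕ} (hij : i + 1 ≤ j) :
    monomial x a i (j + 2) = cofactor x a i (j + 1) * x (j + 1) ^ (a (j + 1) - 1) := by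
  rw [monomial, if_neg (by omega), cofactor]
  rfl

theorem sub_monomial_mem {P : Ideal R} (hP : P.IsPrime) {n : ℕ}
    (ha : ∀ l, 0 < l → l < n → 2 ≤ a l)
    (hrel : ∀ l, l + 2 ≤ n → x l * x (l + 2) - x (l + 1) ^ a (l + 1) ∈ P)
    (hx : ∀ l < n, x l ∉ P) {i j : ℕ} (hij : i + 2 ≤ j) (hjn : j ≤ n) :
    x i * x j - monomial x a i j ∈ P := by
  obtain ⟨j, rfl⟩ : ∃ m, j = m + 1 := ⟨j - 1, by omega⟩
  replace hij : i + 1 ≤ j := by omega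
  induction j, hij using Nat.le_induction with
  | base => simpa [monomial] using hrel i (by omega)
  | succ j hij ih =>
    rw [monomial_add_two_eq_cofactor_mul hij]
    have hrel' := hrel j (by omega)
    rw [← Nat.sub_add_cancel (one_le_two.trans (ha (j + 1) (by omega) (by omega)))] at hrel'
    refine hP.mul_sub_mul_pow_mem (hx (j + 1) (by omega)) ?_ hrel'
    rw [← monomial_succ_eq_cofactor_mul hij (ha j (by omega) (by omega))]
    exact ih (by omega)

end Riemenschneider

namespace MvPowerSeries

variable (R : Type*) [CommSemiring R] (e : ℕ)

noncomputable def natX (l : ℕ) : MvPowerSeries (Fin e) R :=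
  if h : l < e then X ⟨l, h⟩ else 0

variable {R e}

theorem natX_of_lt {l : ℕ} (h : l < e) : natX R e l = X ⟨l, h⟩ := dif_pos h

theorem prod_ite_X_pow_eq_prod_Ioo {b c : ℕ} (hc : c ≤ e) (f : ℕ → ℕ) :
    (∏ l : Fin e, if b < (l : ℕ) ∧ (l : ℕ) < c then X l ^ f l else 1) =
      ∏ l ∈ Ioo b c, natX R e l ^ f l := by
  have hX : ∀ l : Fin e, X l = natX R e l := fun l => (natX_of_lt l.isLt).symm
  simp_rw [hX]
  rw [Fin.prod_univ_eq_prod_range (fun l => if b < l ∧ l < c then natX R e l ^ f l else 1),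
    ← prod_filter]
  congr 1
  ext l
  simp only [mem_filter, mem_range, mem_Ioo]
  omega

end MvPowerSeries

open MvPowerSeries in
/-- second case of the classification theorem.  A prime ideal
`I ⊆ k⟦x₁,…,x_e⟧` containing the toric binomials `x_{i−1}x_{i+1} − xᵢ^{aᵢ}` and
containing no variable contains all of Riemenschneider's equations `g_{i,j}`.
(Variables are indexed `0,…,e−1`.) -/
theorem stmt9 (k : Type*) [Field k] (e : ℕ)
    (a : ℕ → ℕ) (ha : ∀ i, 1 ≤ i → i ≤ e - 2 → 2 ≤ a i)
    (I : Ideal (MvPowerSeries (Fin e) k)) (hprime : I.IsPrime)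
    (hrel : ∀ i : ℕ, ∀ h1 : 1 ≤ i, ∀ h2 : i ≤ e - 2,
      X (⟨i - 1, by omega⟩ : Fin e) * X (⟨i + 1, by omega⟩ : Fin e) -
        X (⟨i, by omega⟩ : Fin e) ^ a i ∈ I)
    (hnovar : ∀ i : Fin e, X i ∉ I) :
    ∀ i j : ℕ, ∀ h1 : i + 2 ≤ j, ∀ h2 : j ≤ e - 1,
      (if j = i + 2 then
        X (⟨i, by omega⟩ : Fin e) * X (⟨j, by omega⟩ : Fin e) -
          X (⟨i + 1, by omega⟩ : Fin e) ^ a (i + 1)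
      else
        X (⟨i, by omega⟩ : Fin e) * X (⟨j, by omega⟩ : Fin e) -
          X (⟨i + 1, by omega⟩ : Fin e) ^ (a (i + 1) - 1) *
            (∏ l : Fin e, if i + 1 < (l : ℕ) ∧ (l : ℕ) < j - 1 then
              X l ^ (a (l : ℕ) - 2) else 1) *
            X (⟨j - 1, by omega⟩ : Fin e) ^ (a (j - 1) - 1)) ∈ I := by
  intro i j hij hje
  have key := Riemenschneider.sub_monomial_mem (x := natX k e) (a := a) hprime (n := e - 1)
    (fun l hl hle => ha l hl (by omega))
    (fun l hl => by
      rw [natX_of_lt (show l < e by omega), natX_of_lt (show l + 2 < e by omega),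
        natX_of_lt (show l + 1 < e by omega)]
      exact hrel (l + 1) (by omega) (by omega))
    (fun l hl => by simpa [natX_of_lt (show l < e by omega)] using hnovar ⟨l, by omega⟩) hij hje
  rw [prod_ite_X_pow_eq_prod_Ioo (show j - 1 ≤ e by omega) (fun l => a l - 2)]
  simp only [← natX_of_lt]
  split_ifs with hj <;> simpa [Riemenschneider.monomial, hj] using key
end
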